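/- arXiv:2512.24527 — 4 statements merged into one kernel-verified Lean document; each statement's English description precedes it below -/
import Mathlib

section
/- For every point x ∈ ℝ^d and every coordinate j ∈ {1, …, d}, the two-point randomized surrogate of the partial derivative satisfies |∂_j f(x) − E[(f(x + hV) − f(x − hV)) V_j] / (2σ²h)| ≤ (M₂ h / σ²) · E[|V_j| · ‖V‖₂²]. -/
/-!
Write `L = fderiv ℝ f x`. Applying the Hölder bound at `x ± hV` and subtracting, the first-order
terms double while the zeroth-order terms cancel, so
`f (x + hV) - f (x - hV) = 2h L V + R` with `|R| ≤ 2 M₂ h² ‖V‖²`.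
Since the coordinates of `V` are uncorrelated with common variance `σ²`, `E[L(V) V_j] = σ² L e_j`,
and dividing by `2σ²h` leaves only the error term `E[R V_j] / (2σ²h)`.
-/

open MeasureTheory

/-- The Euclidean (ℓ₂) norm of a vector of `ℝ^d`. -/
noncomputable def l2norm {d : ℕ} (v : Fin d → ℝ) : ℝ := Real.sqrt (∑ j, (v j) ^ 2)

lemma l2norm_smul_sq {d : ℕ} (c : ℝ) (v : Fin d → ℝ) :
    l2norm (c • v) ^ 2 = c ^ 2 * l2norm v ^ 2 := by
  have hsq (w : Fin d → ℝ) : l2norm w ^ 2 = ∑ k, w k ^ 2 :=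
    Real.sq_sqrt (Finset.sum_nonneg fun _ _ => sq_nonneg _)
  simp only [hsq, Finset.mul_sum, Pi.smul_apply, smul_eq_mul, mul_pow]

lemma abs_central_difference_sub_le {d : ℕ} {f : (Fin d → ℝ) → ℝ} {L : (Fin d → ℝ) →ₗ[ℝ] ℝ}
    {x : Fin d → ℝ} {M₂ : ℝ} (hL : ∀ y, |f y - f x - L (y - x)| ≤ M₂ * l2norm (y - x) ^ 2)
    (h : ℝ) (v : Fin d → ℝ) :
    |f (x + h • v) - f (x - h • v) - 2 * h * L v| ≤ 2 * M₂ * h ^ 2 * l2norm v ^ 2 := by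
  have hplus := hL (x + h • v)
  have hminus := hL (x - h • v)
  rw [add_sub_cancel_left, map_smul, l2norm_smul_sq, smul_eq_mul] at hplus
  rw [sub_sub_cancel_left, ← neg_smul, map_smul, l2norm_smul_sq, smul_eq_mul, neg_sq] at hminus
  calc |f (x + h • v) - f (x - h • v) - 2 * h * L v|
      = |(f (x + h • v) - f x - h * L v) - (f (x - h • v) - f x - -h * L v)| := by ring_nf
    _ ≤ |f (x + h • v) - f x - h * L v| + |f (x - h • v) - f x - -h * L v| := abs_sub _ _
    _ ≤ 2 * M₂ * h ^ 2 * l2norm v ^ 2 := by linarith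

section SecondMoments

variable {ι Ω : Type*} [Fintype ι] [DecidableEq ι] [MeasurableSpace Ω] {μ : Measure Ω}
  {V : Ω → ι → ℝ}

lemma LinearMap.apply_eq_sum_mul_apply_single (L : (ι → ℝ) →ₗ[ℝ] ℝ) (v : ι → ℝ) :
    L v = ∑ k, L (Pi.single k 1) * v k := by
  conv_lhs => rw [pi_eq_sum_univ' v]
  simp [mul_comm]

lemma LinearMap.apply_mul_eq_sum (L : (ι → ℝ) →ₗ[ℝ] ℝ) (v : ι → ℝ) (j : ι) :
    L v * v j = ∑ k, L (Pi.single k 1) * (v k * v j) := by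
  rw [L.apply_eq_sum_mul_apply_single, Finset.sum_mul]
  simp only [mul_assoc]

lemma integrable_linearMap_mul (hint : ∀ k l, Integrable (fun ω => V ω k * V ω l) μ)
    (L : (ι → ℝ) →ₗ[ℝ] ℝ) (j : ι) : Integrable (fun ω => L (V ω) * V ω j) μ := by
  simp only [L.apply_mul_eq_sum]
  exact integrable_finsetSum _ fun k _ => (hint k j).const_mul _

lemma integral_linearMap_mul {σ : ℝ} (hint : ∀ k l, Integrable (fun ω => V ω k * V ω l) μ)
    (horth : ∀ k l, k ≠ l → ∫ ω, V ω k * V ω l ∂μ = 0) (hvar : ∀ k, ∫ ω, V ω k ^ 2 ∂μ = σ ^ 2)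
    (L : (ι → ℝ) →ₗ[ℝ] ℝ) (j : ι) : ∫ ω, L (V ω) * V ω j ∂μ = σ ^ 2 * L (Pi.single j 1) := by
  simp only [L.apply_mul_eq_sum]
  rw [integral_finsetSum _ fun k _ => (hint k j).const_mul _,
    Finset.sum_eq_single j (fun k _ hk => by rw [integral_const_mul, horth k j hk, mul_zero])
      (by simp), integral_const_mul]
  simp only [← sq, hvar, mul_comm]

end SecondMoments

theorem stmt_1_general {d : ℕ} {Ω : Type*} [MeasurableSpace Ω] (μ : Measure Ω)
    (f : (Fin d → ℝ) → ℝ) (M₂ : ℝ)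
    (hHolder : ∀ x y : Fin d → ℝ,
      |f y - f x - fderiv ℝ f x (y - x)| ≤ M₂ * (l2norm (y - x)) ^ 2)
    (V : Ω → (Fin d → ℝ))
    (σ : ℝ) (hσ : 0 < σ)
    (horth : ∀ j k, j ≠ k → ∫ ω, V ω j * V ω k ∂μ = 0)
    (hvar : ∀ j, ∫ ω, (V ω j) ^ 2 ∂μ = σ ^ 2)
    (hint4 : ∀ k l, Integrable (fun ω => V ω k * V ω l) μ)
    (h : ℝ) (hh : 0 < h) (x : Fin d → ℝ) (j : Fin d)
    (hint1 : Integrable (fun ω => (f (x + h • V ω) - f (x - h • V ω)) * V ω j) μ)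
    (hint2 : Integrable (fun ω => |V ω j| * (l2norm (V ω)) ^ 2) μ) :
    |fderiv ℝ f x (Pi.single j 1) -
        (∫ ω, (f (x + h • V ω) - f (x - h • V ω)) * V ω j ∂μ) / (2 * σ ^ 2 * h)| ≤
      M₂ * h / σ ^ 2 * ∫ ω, |V ω j| * (l2norm (V ω)) ^ 2 ∂μ := by
  set L : (Fin d → ℝ) →ₗ[ℝ] ℝ := (fderiv ℝ f x).toLinearMap
  set R : Ω → ℝ := fun ω => (f (x + h • V ω) - f (x - h • V ω) - 2 * h * L (V ω)) * V ω j
  have hLV := integrable_linearMap_mul hint4 L j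
  have hR : Integrable R μ := hint1.sub (hLV.const_mul (2 * h)) |>.congr
    (.of_forall fun ω => by simp only [R, Pi.sub_apply]; ring)
  have hsplit : ∫ ω, (f (x + h • V ω) - f (x - h • V ω)) * V ω j ∂μ
      = 2 * h * (σ ^ 2 * L (Pi.single j 1)) + ∫ ω, R ω ∂μ := by
    rw [← integral_linearMap_mul hint4 horth hvar L j, ← integral_const_mul,
      ← integral_add (hLV.const_mul _) hR]
    exact integral_congr_ae (.of_forall fun ω => by simp only [R]; ring)
  have hRbound : |∫ ω, R ω ∂μ| ≤ 2 * M₂ * h ^ 2 * ∫ ω, |V ω j| * l2norm (V ω) ^ 2 ∂μ := by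
    rw [← Real.norm_eq_abs, ← integral_const_mul]
    refine norm_integral_le_of_norm_le (hint2.const_mul _) (.of_forall fun ω => ?_)
    rw [Real.norm_eq_abs, abs_mul]
    calc _ ≤ 2 * M₂ * h ^ 2 * l2norm (V ω) ^ 2 * |V ω j| := by
          gcongr
          exact abs_central_difference_sub_le (hHolder x) h (V ω)
      _ = _ := by ring
  have hden : 0 < 2 * σ ^ 2 * h := by positivity
  have hcancel : L (Pi.single j 1) - (2 * h * (σ ^ 2 * L (Pi.single j 1)) + ∫ ω, R ω ∂μ) /
      (2 * σ ^ 2 * h) = -((∫ ω, R ω ∂μ) / (2 * σ ^ 2 * h)) := by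
    field_simp
    ring
  change |L _ - _| ≤ _
  rw [hsplit, hcancel, abs_neg, abs_div, abs_of_pos hden, div_le_iff₀ hden]
  calc _ ≤ 2 * M₂ * h ^ 2 * ∫ ω, |V ω j| * l2norm (V ω) ^ 2 ∂μ := hRbound
    _ = _ := by field_simp

/-- Two-point randomized surrogate of the partial derivative: for every `x ∈ ℝ^d` and
coordinate `j`,
`|∂_j f(x) − E[(f(x+hV) − f(x−hV)) V_j]/(2σ²h)| ≤ (M₂ h/σ²) E[|V_j| ‖V‖₂²]`. -/
theorem stmt_1 {d : ℕ} {Ω : Type*} [MeasurableSpace Ω] (μ : Measure Ω) [IsProbabilityMeasure μ]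
    (f : (Fin d → ℝ) → ℝ) (hdiff : Differentiable ℝ f) (M₂ : ℝ) (hM₂ : 0 < M₂)
    (hHolder : ∀ x y : Fin d → ℝ,
      |f y - f x - fderiv ℝ f x (y - x)| ≤ M₂ * (l2norm (y - x)) ^ 2)
    (V : Ω → (Fin d → ℝ)) (hVmeas : Measurable V)
    (σ : ℝ) (hσ : 0 < σ)
    (hmean : ∀ j, ∫ ω, V ω j ∂μ = 0)
    (horth : ∀ j k, j ≠ k → ∫ ω, V ω j * V ω k ∂μ = 0)
    (hvar : ∀ j, ∫ ω, (V ω j) ^ 2 ∂μ = σ ^ 2)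
    (hint3 : ∀ k, Integrable (fun ω => V ω k) μ)
    (hint4 : ∀ k l, Integrable (fun ω => V ω k * V ω l) μ)
    (h : ℝ) (hh : 0 < h) (x : Fin d → ℝ) (j : Fin d)
    (hint1 : Integrable (fun ω => (f (x + h • V ω) - f (x - h • V ω)) * V ω j) μ)
    (hint2 : Integrable (fun ω => |V ω j| * (l2norm (V ω)) ^ 2) μ) :
    |fderiv ℝ f x (Pi.single j 1) -
        (∫ ω, (f (x + h • V ω) - f (x - h • V ω)) * V ω j ∂μ) / (2 * σ ^ 2 * h)| ≤
      M₂ * h / σ ^ 2 * ∫ ω, |V ω j| * (l2norm (V ω)) ^ 2 ∂μ :=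
  stmt_1_general μ f M₂ hHolder V σ hσ horth hvar hint4 h hh x j hint1 hint2
end

section
/- Let w ∈ ℝ^d be defined by w_j := E[|V_j| · ‖V‖₂²]. Then for every real d×d matrix A and every x ∈ ℝ^d, ‖A∇f(x) − A · E[(f(x + hV) − f(x − hV)) V] / (2σ²h)‖₂ ≤ (M₂ h / σ²) · ‖ |A| w ‖₂, and the same inequality holds with the ℓ₁-norm in place of the ℓ₂-norm on both sides, where |A| denotes the matrix of entrywise absolute values of A. -/
/-!
Write `D = f(x + hV) - f(x - hV)`. Applying the second-order Hölder condition at `x ± hV` gives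
`D = 2h ⟨∇f(x), V⟩ + R` with `|R| ≤ 2 M₂ h² ‖V‖₂²`. Because the second-moment matrix of `V` is
`σ² I`, `E[⟨∇f(x), V⟩ V] = σ² ∇f(x)`, so the `j`-th coordinate of `∇f(x) - E[D V] / (2σ²h)` is
`-E[R V_j] / (2σ²h)`, of absolute value at most `(M₂ h / σ²) w_j`. Multiplying by `A` bounds each
coordinate of the error by the corresponding coordinate of `(M₂ h / σ²) |A| w`, and both norms are
monotone in the absolute values of the coordinates.
-/

open MeasureTheory

/-- The ℓ₁ norm of a vector of `ℝ^d`. -/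
def l1norm {d : ℕ} (v : Fin d → ℝ) : ℝ := ∑ j, |v j|

open Matrix

section Norms

variable {d : ℕ}

lemma l2norm_eq_norm_toLp (v : Fin d → ℝ) :
    l2norm v = ‖(WithLp.toLp 2 v : EuclideanSpace ℝ (Fin d))‖ := by
  simp [l2norm, EuclideanSpace.norm_eq]

lemma l2norm_smul (c : ℝ) (v : Fin d → ℝ) : l2norm (c • v) = |c| * l2norm v := by
  simp only [l2norm_eq_norm_toLp, WithLp.toLp_smul, norm_smul, Real.norm_eq_abs]

lemma l2norm_neg (v : Fin d → ℝ) : l2norm (-v) = l2norm v := by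
  simp only [l2norm_eq_norm_toLp, WithLp.toLp_neg, norm_neg]

lemma l1norm_smul (c : ℝ) (v : Fin d → ℝ) : l1norm (c • v) = |c| * l1norm v := by
  simp only [l1norm, Pi.smul_apply, smul_eq_mul, abs_mul, Finset.mul_sum]

lemma l2norm_le_of_abs_le {u v : Fin d → ℝ} (h : ∀ j, |u j| ≤ v j) : l2norm u ≤ l2norm v := by
  refine Real.sqrt_le_sqrt (Finset.sum_le_sum fun j _ => ?_)
  simpa only [sq_abs] using pow_le_pow_left₀ (abs_nonneg _) (h j) 2

lemma l1norm_le_of_abs_le {u v : Fin d → ℝ} (h : ∀ j, |u j| ≤ v j) : l1norm u ≤ l1norm v :=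
  Finset.sum_le_sum fun j _ => (h j).trans (le_abs_self _)

end Norms

lemma abs_mulVec_le_mulVec_abs {m n : Type*} [Fintype n] (A : Matrix m n ℝ) {e b : n → ℝ}
    (h : ∀ k, |e k| ≤ b k) (i : m) : |(A *ᵥ e) i| ≤ (A.map (fun a => |a|) *ᵥ b) i := by
  simp only [mulVec, dotProduct, map_apply]
  refine (Finset.abs_sum_le_sum_abs _ _).trans (Finset.sum_le_sum fun k _ => ?_)
  rw [abs_mul]
  exact mul_le_mul_of_nonneg_left (h k) (abs_nonneg _)

lemma abs_centralDifference_sub_le {E F : Type*} [AddCommGroup E] [FunLike F E ℝ]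
    [AddMonoidHomClass F E ℝ] (f : E → ℝ) (L : F)
    (N : E → ℝ) (x : E) (hx : ∀ u, |f (x + u) - f x - L u| ≤ N u) (u : E) :
    |f (x + u) - f (x - u) - 2 * L u| ≤ N u + N (-u) := by
  have hneg := hx (-u)
  rw [map_neg, ← sub_eq_add_neg] at hneg
  calc |f (x + u) - f (x - u) - 2 * L u|
      = |(f (x + u) - f x - L u) - (f (x - u) - f x - -L u)| := by ring_nf
    _ ≤ N u + N (-u) := (abs_sub _ _).trans (add_le_add (hx u) hneg)

lemma LinearMap.apply_eq_dotProduct {R ι : Type*} [CommSemiring R] [Fintype ι] [DecidableEq ι]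
    (L : (ι → R) →ₗ[R] R) (v : ι → R) : L v = (fun k => L (Pi.single k 1)) ⬝ᵥ v := by
  have hsingle (k : ι) : (fun j => if k = j then (1 : R) else 0) = Pi.single k 1 := by
    ext j; simp [Pi.single_apply, eq_comm]
  simp only [L.pi_apply_eq_sum_univ v, hsingle, dotProduct, smul_eq_mul, mul_comm]

lemma integral_pi_apply {Ω ι E : Type*} [MeasurableSpace Ω] {μ : Measure Ω} [Fintype ι]
    [NormedAddCommGroup E] [NormedSpace ℝ E] [CompleteSpace E] {F : Ω → ι → E}
    (hF : Integrable F μ) (i : ι) :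
    (∫ ω, F ω ∂μ) i = ∫ ω, F ω i ∂μ :=
  ((ContinuousLinearMap.proj i : (ι → E) →L[ℝ] E).integral_comp_comm hF).symm

section SecondMoments

variable {Ω ι : Type*} [MeasurableSpace Ω] {μ : Measure Ω} [Fintype ι] {V : Ω → ι → ℝ}

lemma dotProduct_mul_eq_sum (c v : ι → ℝ) (j : ι) :
    (c ⬝ᵥ v) * v j = ∑ k, c k * (v k * v j) := by
  simp only [dotProduct, Finset.sum_mul, mul_assoc]

lemma integrable_dotProduct_mul (hV : ∀ k l, Integrable (fun ω => V ω k * V ω l) μ)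
    (c : ι → ℝ) (j : ι) : Integrable (fun ω => (c ⬝ᵥ V ω) * V ω j) μ := by
  simp only [dotProduct_mul_eq_sum]
  exact integrable_finsetSum _ fun k _ => (hV k j).const_mul _

lemma integral_dotProduct_mul (hV : ∀ k l, Integrable (fun ω => V ω k * V ω l) μ)
    (horth : ∀ j k, j ≠ k → ∫ ω, V ω j * V ω k ∂μ = 0)
    {σ : ℝ} (hvar : ∀ j, ∫ ω, V ω j ^ 2 ∂μ = σ ^ 2) (c : ι → ℝ) (j : ι) :
    ∫ ω, (c ⬝ᵥ V ω) * V ω j ∂μ = σ ^ 2 * c j := by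
  simp only [dotProduct_mul_eq_sum]
  rw [integral_finsetSum _ fun k _ => (hV k j).const_mul _]
  simp only [integral_const_mul]
  rw [Finset.sum_eq_single j (fun k _ hk => by rw [horth k j hk, mul_zero]) (by simp)]
  simp only [← sq, hvar j, mul_comm]

end SecondMoments

lemma abs_integral_mul_le {Ω : Type*} [MeasurableSpace Ω] {μ : Measure Ω} {R Y q : Ω → ℝ}
    {C : ℝ} (hR : ∀ ω, |R ω| ≤ C * q ω) (hq : Integrable (fun ω => |Y ω| * q ω) μ) :
    |∫ ω, R ω * Y ω ∂μ| ≤ C * ∫ ω, |Y ω| * q ω ∂μ := by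
  rw [← Real.norm_eq_abs, ← integral_const_mul C (fun ω => |Y ω| * q ω)]
  refine norm_integral_le_of_norm_le (hq.const_mul C) (Filter.Eventually.of_forall fun ω => ?_)
  calc ‖R ω * Y ω‖ = |Y ω| * |R ω| := by rw [Real.norm_eq_abs, abs_mul, mul_comm]
    _ ≤ |Y ω| * (C * q ω) := mul_le_mul_of_nonneg_left (hR ω) (abs_nonneg _)
    _ = C * (|Y ω| * q ω) := mul_left_comm _ _ _

lemma abs_sub_centralDifferenceEstimate_le {Ω : Type*} [MeasurableSpace Ω] {μ : Measure Ω}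
    {d : ℕ} (f : (Fin d → ℝ) → ℝ) (L : (Fin d → ℝ) →L[ℝ] ℝ) {M : ℝ} (x : Fin d → ℝ)
    (hx : ∀ y, |f y - f x - L (y - x)| ≤ M * l2norm (y - x) ^ 2) {V : Ω → Fin d → ℝ}
    (hV : ∀ k l, Integrable (fun ω => V ω k * V ω l) μ)
    (horth : ∀ j k, j ≠ k → ∫ ω, V ω j * V ω k ∂μ = 0)
    {σ : ℝ} (hσ : 0 < σ) (hvar : ∀ j, ∫ ω, V ω j ^ 2 ∂μ = σ ^ 2) {h : ℝ} (hh : 0 < h)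
    (hD : Integrable (fun ω => (f (x + h • V ω) - f (x - h • V ω)) • V ω) μ) {j : Fin d}
    (hq : Integrable (fun ω => |V ω j| * l2norm (V ω) ^ 2) μ) :
    |L (Pi.single j 1) -
        1 / (2 * σ ^ 2 * h) * (∫ ω, (f (x + h • V ω) - f (x - h • V ω)) • V ω ∂μ) j| ≤
      M * h / σ ^ 2 * ∫ ω, |V ω j| * l2norm (V ω) ^ 2 ∂μ := by
  set g : Fin d → ℝ := fun k => L (Pi.single k 1)
  set I := ∫ ω, (f (x + h • V ω) - f (x - h • V ω)) • V ω ∂μ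
  set R : Ω → ℝ := fun ω => f (x + h • V ω) - f (x - h • V ω) - 2 * L (h • V ω)
  have hR : ∀ ω, |R ω| ≤ 2 * M * h ^ 2 * l2norm (V ω) ^ 2 := fun ω => by
    have := abs_centralDifference_sub_le f L (fun u => M * l2norm u ^ 2) x
      (fun u => by simpa only [add_sub_cancel_left] using hx (x + u)) (h • V ω)
    rw [l2norm_neg, l2norm_smul, abs_of_pos hh] at this
    linarith
  have hRV : ∫ ω, R ω * V ω j ∂μ = I j - 2 * h * (σ ^ 2 * g j) := by
    have hL (ω : Ω) : L (h • V ω) = h * (g ⬝ᵥ V ω) := by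
      rw [L.map_smul, smul_eq_mul, ← L.coe_coe, LinearMap.apply_eq_dotProduct]; rfl
    rw [show I j = _ from integral_pi_apply hD j, ← integral_dotProduct_mul hV horth hvar g j,
      ← integral_const_mul,
      ← integral_sub (hD.eval j) ((integrable_dotProduct_mul hV g j).const_mul _)]
    congr 1; ext ω
    simp only [R, hL, Pi.smul_apply, smul_eq_mul]; ring
  have hdiff :
      g j - 1 / (2 * σ ^ 2 * h) * I j = -(1 / (2 * σ ^ 2 * h) * ∫ ω, R ω * V ω j ∂μ) := by
    rw [hRV]; field_simp; ring
  calc |g j - 1 / (2 * σ ^ 2 * h) * I j|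
      = 1 / (2 * σ ^ 2 * h) * |∫ ω, R ω * V ω j ∂μ| := by
        rw [hdiff, abs_neg, abs_mul, abs_of_pos (by positivity)]
    _ ≤ 1 / (2 * σ ^ 2 * h) * (2 * M * h ^ 2 * ∫ ω, |V ω j| * l2norm (V ω) ^ 2 ∂μ) := by
        gcongr; exact abs_integral_mul_le hR hq
    _ = M * h / σ ^ 2 * ∫ ω, |V ω j| * l2norm (V ω) ^ 2 ∂μ := by
        field_simp

theorem stmt_2_general {d : ℕ} {Ω : Type*} [MeasurableSpace Ω] (μ : Measure Ω)
    (f : (Fin d → ℝ) → ℝ) (M₂ : ℝ) (hM₂ : 0 < M₂)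
    (hHolder : ∀ x y : Fin d → ℝ,
      |f y - f x - fderiv ℝ f x (y - x)| ≤ M₂ * (l2norm (y - x)) ^ 2)
    (V : Ω → (Fin d → ℝ))
    (σ : ℝ) (hσ : 0 < σ)
    (horth : ∀ j k, j ≠ k → ∫ ω, V ω j * V ω k ∂μ = 0)
    (hvar : ∀ j, ∫ ω, (V ω j) ^ 2 ∂μ = σ ^ 2)
    (hint4 : ∀ k l, Integrable (fun ω => V ω k * V ω l) μ)
    (h : ℝ) (hh : 0 < h) (x : Fin d → ℝ)
    (hint1 : Integrable (fun ω => (f (x + h • V ω) - f (x - h • V ω)) • V ω) μ)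
    (hint2 : ∀ j, Integrable (fun ω => |V ω j| * (l2norm (V ω)) ^ 2) μ)
    (w : Fin d → ℝ) (hw : ∀ j, w j = ∫ ω, |V ω j| * (l2norm (V ω)) ^ 2 ∂μ)
    (A : Matrix (Fin d) (Fin d) ℝ) :
    l2norm (A.mulVec (fun j => fderiv ℝ f x (Pi.single j 1)) -
          A.mulVec ((1 / (2 * σ ^ 2 * h)) •
            ∫ ω, (f (x + h • V ω) - f (x - h • V ω)) • V ω ∂μ)) ≤
        M₂ * h / σ ^ 2 * l2norm ((A.map (fun a => |a|)).mulVec w) ∧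
      l1norm (A.mulVec (fun j => fderiv ℝ f x (Pi.single j 1)) -
          A.mulVec ((1 / (2 * σ ^ 2 * h)) •
            ∫ ω, (f (x + h • V ω) - f (x - h • V ω)) • V ω ∂μ)) ≤
        M₂ * h / σ ^ 2 * l1norm ((A.map (fun a => |a|)).mulVec w) := by
  have hc : 0 ≤ M₂ * h / σ ^ 2 := by positivity
  have herr : ∀ i, |(A *ᵥ (fun j => fderiv ℝ f x (Pi.single j 1)) -
      A *ᵥ ((1 / (2 * σ ^ 2 * h)) • ∫ ω, (f (x + h • V ω) - f (x - h • V ω)) • V ω ∂μ)) i| ≤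
      ((M₂ * h / σ ^ 2) • (A.map (fun a => |a|) *ᵥ w)) i := by
    rw [← mulVec_sub, ← mulVec_smul]
    refine abs_mulVec_le_mulVec_abs A fun k => ?_
    simpa only [Pi.sub_apply, Pi.smul_apply, smul_eq_mul, hw k] using
      abs_sub_centralDifferenceEstimate_le f _ x (hHolder x) hint4 horth hσ hvar hh hint1 (hint2 k)
  exact ⟨(l2norm_le_of_abs_le herr).trans_eq (by rw [l2norm_smul, abs_of_nonneg hc]),
    (l1norm_le_of_abs_le herr).trans_eq (by rw [l1norm_smul, abs_of_nonneg hc])⟩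

/-- Vector bias bound: with `w_j := E[|V_j| ‖V‖₂²]`, for every `d × d` matrix `A` and `x ∈ ℝ^d`,
`‖A∇f(x) − A E[(f(x+hV) − f(x−hV)) V]/(2σ²h)‖₂ ≤ (M₂h/σ²) ‖|A| w‖₂`, and the same with the
ℓ₁ norm on both sides, where `|A|` is the matrix of entrywise absolute values of `A`. -/
theorem stmt_2 {d : ℕ} {Ω : Type*} [MeasurableSpace Ω] (μ : Measure Ω) [IsProbabilityMeasure μ]
    (f : (Fin d → ℝ) → ℝ) (hdiff : Differentiable ℝ f) (M₂ : ℝ) (hM₂ : 0 < M₂)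
    (hHolder : ∀ x y : Fin d → ℝ,
      |f y - f x - fderiv ℝ f x (y - x)| ≤ M₂ * (l2norm (y - x)) ^ 2)
    (V : Ω → (Fin d → ℝ)) (hVmeas : Measurable V)
    (σ : ℝ) (hσ : 0 < σ)
    (hmean : ∀ j, ∫ ω, V ω j ∂μ = 0)
    (horth : ∀ j k, j ≠ k → ∫ ω, V ω j * V ω k ∂μ = 0)
    (hvar : ∀ j, ∫ ω, (V ω j) ^ 2 ∂μ = σ ^ 2)
    (hint3 : ∀ k, Integrable (fun ω => V ω k) μ)
    (hint4 : ∀ k l, Integrable (fun ω => V ω k * V ω l) μ)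
    (h : ℝ) (hh : 0 < h) (x : Fin d → ℝ)
    (hint1 : Integrable (fun ω => (f (x + h • V ω) - f (x - h • V ω)) • V ω) μ)
    (hint2 : ∀ j, Integrable (fun ω => |V ω j| * (l2norm (V ω)) ^ 2) μ)
    (w : Fin d → ℝ) (hw : ∀ j, w j = ∫ ω, |V ω j| * (l2norm (V ω)) ^ 2 ∂μ)
    (A : Matrix (Fin d) (Fin d) ℝ) :
    l2norm (A.mulVec (fun j => fderiv ℝ f x (Pi.single j 1)) -
          A.mulVec ((1 / (2 * σ ^ 2 * h)) •
            ∫ ω, (f (x + h • V ω) - f (x - h • V ω)) • V ω ∂μ)) ≤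
        M₂ * h / σ ^ 2 * l2norm ((A.map (fun a => |a|)).mulVec w) ∧
      l1norm (A.mulVec (fun j => fderiv ℝ f x (Pi.single j 1)) -
          A.mulVec ((1 / (2 * σ ^ 2 * h)) •
            ∫ ω, (f (x + h • V ω) - f (x - h • V ω)) • V ω ∂μ)) ≤
        M₂ * h / σ ^ 2 * l1norm ((A.map (fun a => |a|)).mulVec w) :=
  stmt_2_general μ f M₂ hM₂ hHolder V σ hσ horth hvar hint4 h hh x hint1 hint2 w hw A
end

section
/- For every fixed real a > 0, the ratio Γ(x + a) / (Γ(x) · x^a) tends to 1 as x → +∞. -/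
/-!
Write `R_a(x) = Γ(x + a) / (Γ(x) x^a)` (`gammaRatio a x`). For `0 < a < 1`, log-convexity of
`Γ` (in Hölder form), applied once between `x` and `x + 1` and once between `x + a` and
`x + a + 1`, gives Wendel's bounds `(x / (x + a))^(1 - a) ≤ R_a(x) ≤ 1`, so `R_a(x) → 1`.
The functional equation `Γ(s + 1) = s Γ(s)` gives `R_{a+1}(x) = R_a(x) (x + a) / x`, and since
`(x + a) / x → 1` the limit transfers between `a` and `a + 1` in both directions, hence to
every real `a`.
-/

open Filter Real Topology

noncomputable def gammaRatio (a x : ℝ) : ℝ := Gamma (x + a) / (Gamma x * x ^ a)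

lemma gammaRatio_zero {x : ℝ} (hx : 0 < x) : gammaRatio 0 x = 1 := by
  simp [gammaRatio, (Gamma_pos_of_pos hx).ne']

lemma gammaRatio_add_one {a x : ℝ} (hx : 0 < x) (hxa : x + a ≠ 0) :
    gammaRatio (a + 1) x = gammaRatio a x * ((x + a) / x) := by
  have hΓ := (Gamma_pos_of_pos hx).ne'
  rw [gammaRatio, gammaRatio, ← add_assoc, Gamma_add_one hxa, rpow_add hx, rpow_one]
  field_simp

lemma tendsto_add_div_self_atTop (a : ℝ) : Tendsto (fun x : ℝ => (x + a) / x) atTop (𝓝 1) := by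
  have h : Tendsto (fun x : ℝ => 1 + a / x) atTop (𝓝 (1 + 0)) :=
    tendsto_const_nhds.add (tendsto_const_nhds.div_atTop tendsto_id)
  rw [add_zero] at h
  refine h.congr' ?_
  filter_upwards [eventually_gt_atTop 0] with x hx
  field_simp

lemma tendsto_gammaRatio_add_one_iff (a : ℝ) :
    Tendsto (gammaRatio (a + 1)) atTop (𝓝 1) ↔ Tendsto (gammaRatio a) atTop (𝓝 1) := by
  have h := tendsto_mul_iff_of_ne_zero (f := gammaRatio a) (x := 1)
    (tendsto_add_div_self_atTop a) one_ne_zero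
  rw [mul_one] at h
  rw [← h]
  refine tendsto_congr' ?_
  filter_upwards [eventually_gt_atTop 0, eventually_gt_atTop (-a)] with x hx hxa
  exact gammaRatio_add_one hx (by linarith)

lemma tendsto_gammaRatio_add_int {a : ℝ} (h : Tendsto (gammaRatio a) atTop (𝓝 1)) (n : ℤ) :
    Tendsto (gammaRatio (a + n)) atTop (𝓝 1) := by
  induction n using Int.induction_on with
  | zero => simpa using h
  | succ n ih =>
    rw [Int.cast_add, Int.cast_one, ← add_assoc]
    exact (tendsto_gammaRatio_add_one_iff _).2 ih
  | pred n ih =>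
    rw [← tendsto_gammaRatio_add_one_iff]
    push_cast at ih ⊢
    rwa [add_assoc, sub_add_cancel]

lemma gammaRatio_le_one {a x : ℝ} (ha : 0 < a) (ha1 : a < 1) (hx : 0 < x) :
    gammaRatio a x ≤ 1 := by
  have hΓ := Gamma_pos_of_pos hx
  have hölder := Gamma_mul_add_mul_le_rpow_Gamma_mul_rpow_Gamma hx (by linarith : 0 < x + 1)
    (by linarith : 0 < 1 - a) ha (by ring)
  rw [show (1 - a) * x + a * (x + 1) = x + a by ring, Gamma_add_one hx.ne', mul_comm x,
    mul_rpow hΓ.le hx.le, ← mul_assoc, ← rpow_add hΓ, sub_add_cancel, rpow_one] at hölder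
  rw [gammaRatio, div_le_one (by positivity)]
  exact hölder

lemma div_add_rpow_le_gammaRatio {a x : ℝ} (ha : 0 < a) (ha1 : a < 1) (hx : 0 < x) :
    (x / (x + a)) ^ (1 - a) ≤ gammaRatio a x := by
  have hxa : 0 < x + a := by linarith
  have hΓ := Gamma_pos_of_pos hxa
  have hölder := Gamma_mul_add_mul_le_rpow_Gamma_mul_rpow_Gamma hxa (by linarith : 0 < x + a + 1)
    ha (by linarith : 0 < 1 - a) (by ring)
  rw [show a * (x + a) + (1 - a) * (x + a + 1) = x + 1 by ring, Gamma_add_one hx.ne',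
    Gamma_add_one hxa.ne', mul_rpow hxa.le hΓ.le, mul_left_comm, ← rpow_add hΓ,
    add_sub_cancel, rpow_one] at hölder
  have hx_split : x * Gamma x = x ^ (1 - a) * (Gamma x * x ^ a) := by
    rw [mul_left_comm, ← rpow_add hx, sub_add_cancel, rpow_one, mul_comm]
  rw [gammaRatio, div_rpow hx.le hxa.le, div_le_div_iff₀ (by positivity)
    (mul_pos (Gamma_pos_of_pos hx) (by positivity)), ← hx_split, mul_comm (Gamma _)]
  exact hölder

lemma tendsto_gammaRatio_of_lt_one {a : ℝ} (ha : 0 ≤ a) (ha1 : a < 1) :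
    Tendsto (gammaRatio a) atTop (𝓝 1) := by
  rcases ha.eq_or_lt with rfl | ha
  · exact tendsto_const_nhds.congr' <| (eventually_gt_atTop 0).mono fun x hx =>
      (gammaRatio_zero hx).symm
  have hlower : Tendsto (fun x : ℝ => (x / (x + a)) ^ (1 - a)) atTop (𝓝 1) := by
    have h := ((tendsto_add_div_self_atTop a).inv₀ one_ne_zero).rpow_const
      (p := 1 - a) (Or.inl (by norm_num))
    simpa only [inv_div, inv_one, one_rpow] using h
  refine tendsto_of_tendsto_of_tendsto_of_le_of_le' hlower tendsto_const_nhds ?_ ?_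
  · filter_upwards [eventually_gt_atTop 0] with x hx
    exact div_add_rpow_le_gammaRatio ha ha1 hx
  · filter_upwards [eventually_gt_atTop 0] with x hx
    exact gammaRatio_le_one ha ha1 hx

theorem stmt_5_general (a : ℝ) :
    Filter.Tendsto (fun x : ℝ => Real.Gamma (x + a) / (Real.Gamma x * x ^ a))
      Filter.atTop (nhds 1) := by
  have h := tendsto_gammaRatio_add_int
    (tendsto_gammaRatio_of_lt_one (Int.fract_nonneg a) (Int.fract_lt_one a)) ⌊a⌋
  rwa [Int.fract_add_floor] at h

/-- For every fixed real `a > 0`, the ratio `Γ(x+a)/(Γ(x) x^a)` tends to `1` as `x → +∞`. -/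
theorem stmt_5 (a : ℝ) (ha : 0 < a) :
    Filter.Tendsto (fun x : ℝ => Real.Gamma (x + a) / (Real.Gamma x * x ^ a))
      Filter.atTop (nhds 1) :=
  stmt_5_general a
end

section
/- Let U be a random vector in ℝ^d and R a strictly positive real random variable independent of U. Let p ≥ 1, q > 0 and C, c₀ > 0 be constants, and assume the concentration property: for every L > 0, every function f : ℝ^d → ℝ that is L-Lipschitz with respect to the Euclidean norm, and every t > 0, P(|f(U) − f(0)| ≥ t) ≤ C · exp(−c₀ d t^p / L^p). Then for every L₀-Lipschitz function g : ℝ^d → ℝ with E[R^q] < ∞, E[|g(R·U) − g(0)|^q] ≤ (q C Γ(q/p) / (p c₀^{q/p})) · (L₀^q / d^{q/p}) · E[R^q]. -/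
/-!
Conditionally on `R = r`, the map `u ↦ g (r • u)` is `r L₀`-Lipschitz, so the concentration
hypothesis bounds the tail of `|g (r • U) - g 0|` by `C exp (-c₀ d t^p / (r L₀)^p)`. The layer
cake formula turns this tail bound into a Gamma integral, so the conditional `q`-th moment is at
most the claimed constant times `r^q`; since `R` and `U` are independent, integrating over `R`
replaces `r^q` by `E[R^q]`.
-/

open MeasureTheory Set ProbabilityTheory

theorem lintegral_rpow_le_of_meas_le_exp {α : Type*} [MeasurableSpace α] {ν : Measure α}
    {f : α → ℝ} (hf_nn : 0 ≤ᵐ[ν] f) (hf : AEMeasurable f ν) {p q b C : ℝ}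
    (hp : 0 < p) (hq : 0 < q) (hb : 0 < b) (hC : 0 ≤ C)
    (htail : ∀ t, 0 < t → ν {x | t ≤ f x} ≤ ENNReal.ofReal (C * Real.exp (-b * t ^ p))) :
    ∫⁻ x, ENNReal.ofReal (f x ^ q) ∂ν ≤
      ENNReal.ofReal (q * C * Real.Gamma (q / p) / (p * b ^ (q / p))) := by
  set F : ℝ → ℝ := fun t => C * (t ^ (q - 1) * Real.exp (-b * t ^ p))
  have hF_int : IntegrableOn F (Ioi 0) :=
    (integrableOn_rpow_mul_exp_neg_mul_rpow (by linarith) hp hb).const_mul C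
  have hF_nn : 0 ≤ᵐ[volume.restrict (Ioi 0)] F := by
    filter_upwards [self_mem_ae_restrict measurableSet_Ioi] with t ht
    have := Real.rpow_nonneg (le_of_lt ht) (q - 1)
    positivity
  rw [lintegral_rpow_eq_lintegral_meas_le_mul ν hf_nn hf hq]
  calc ENNReal.ofReal q * ∫⁻ t in Ioi 0, ν {x | t ≤ f x} * ENNReal.ofReal (t ^ (q - 1))
      ≤ ENNReal.ofReal q * ∫⁻ t in Ioi 0, ENNReal.ofReal (F t) := by
        gcongr ENNReal.ofReal q * ?_
        refine setLIntegral_mono' measurableSet_Ioi fun t ht => ?_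
        rw [show F t = C * Real.exp (-b * t ^ p) * t ^ (q - 1) by ring,
          ENNReal.ofReal_mul (by positivity)]
        exact mul_le_mul_left (htail t ht) _
    _ = ENNReal.ofReal (q * ∫ t in Ioi 0, F t) := by
        rw [← ofReal_integral_eq_lintegral_ofReal hF_int hF_nn, ENNReal.ofReal_mul hq.le]
    _ = _ := by
        rw [integral_const_mul, integral_rpow_mul_exp_neg_mul_rpow hp (by linarith) hb,
          sub_add_cancel, neg_div, Real.rpow_neg hb.le]
        congr 1
        field_simp

theorem lintegral_rpow_le_of_meas_le_exp_div_rpow {α : Type*} [MeasurableSpace α]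
    {ν : Measure α} {f : α → ℝ} (hf_nn : 0 ≤ᵐ[ν] f) (hf : AEMeasurable f ν) {p q a L C : ℝ}
    (hp : 0 < p) (hq : 0 < q) (ha : 0 < a) (hL : 0 < L) (hC : 0 ≤ C)
    (htail : ∀ t, 0 < t →
      ν {x | t ≤ f x} ≤ ENNReal.ofReal (C * Real.exp (-(a * t ^ p) / L ^ p))) :
    ∫⁻ x, ENNReal.ofReal (f x ^ q) ∂ν ≤
      ENNReal.ofReal (q * C * Real.Gamma (q / p) / (p * a ^ (q / p)) * L ^ q) := by
  have hLp : 0 < L ^ p := Real.rpow_pos_of_pos hL p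
  convert lintegral_rpow_le_of_meas_le_exp hf_nn hf hp hq (div_pos ha hLp) hC
    (fun t ht => by simpa only [neg_div, neg_mul, div_mul_eq_mul_div] using htail t ht) using 2
  rw [Real.div_rpow ha.le hLp.le, ← Real.rpow_mul hL.le, mul_div_cancel₀ q hp.ne']
  field_simp

theorem LipschitzWith.comp_smul_of_nonneg {E : Type*} [NormedAddCommGroup E] [NormedSpace ℝ E]
    {g : E → ℝ} {L r : ℝ} (hg : LipschitzWith L.toNNReal g) (hr : 0 ≤ r) :
    LipschitzWith (r * L).toNNReal (fun u => g (r • u)) := by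
  have h := hg.comp (lipschitzWith_smul (β := E) r)
  rwa [Real.nnnorm_of_nonneg hr, mul_comm, ← Real.toNNReal_of_nonneg hr,
    ← Real.toNNReal_mul hr] at h

theorem ProbabilityTheory.IndepFun.lintegral_comp_eq_lintegral_lintegral {Ω α β : Type*}
    [MeasurableSpace Ω] [MeasurableSpace α] [MeasurableSpace β] {μ : Measure Ω}
    [IsFiniteMeasure μ] {X : Ω → α} {Y : Ω → β} (hXY : IndepFun X Y μ) (hX : Measurable X)
    (hY : Measurable Y) {φ : α × β → ENNReal} (hφ : Measurable φ) :
    ∫⁻ ω, φ (X ω, Y ω) ∂μ = ∫⁻ ω, ∫⁻ ω', φ (X ω, Y ω') ∂μ ∂μ := by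
  have hinner : Measurable fun x => ∫⁻ y, φ (x, y) ∂(μ.map Y) := hφ.lintegral_prod_right'
  calc ∫⁻ ω, φ (X ω, Y ω) ∂μ = ∫⁻ z, φ z ∂((μ.map X).prod (μ.map Y)) := by
        rw [← (indepFun_iff_map_prod_eq_prod_map_map hX.aemeasurable hY.aemeasurable).mp hXY,
          lintegral_map hφ (hX.prodMk hY)]
    _ = ∫⁻ x, ∫⁻ y, φ (x, y) ∂(μ.map Y) ∂(μ.map X) := lintegral_prod _ hφ.aemeasurable
    _ = ∫⁻ ω, ∫⁻ ω', φ (X ω, Y ω') ∂μ ∂μ := by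
        rw [lintegral_map hinner hX]
        exact lintegral_congr fun ω => lintegral_map (hφ.comp measurable_prodMk_left) hY

/-- If `U` satisfies the `p`-exponential concentration property for Lipschitz functions and
`R > 0` is independent of `U`, then for every `L₀`-Lipschitz `g` with `E[R^q] < ∞`,
`E[|g(R·U) − g(0)|^q] ≤ (q C Γ(q/p)/(p c₀^{q/p})) (L₀^q/d^{q/p}) E[R^q]`. -/
theorem stmt_9 {Ω : Type*} [MeasurableSpace Ω] (μ : Measure Ω) [IsProbabilityMeasure μ]
    {d : ℕ} (hd : 0 < d)
    (U : Ω → EuclideanSpace ℝ (Fin d)) (R : Ω → ℝ)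
    (hUmeas : Measurable U) (hRmeas : Measurable R)
    (hRpos : ∀ ω, 0 < R ω) (hindep : ProbabilityTheory.IndepFun R U μ)
    (p q C c₀ : ℝ) (hp : 1 ≤ p) (hq : 0 < q) (hC : 0 < C) (hc₀ : 0 < c₀)
    (hconc : ∀ L : ℝ, 0 < L → ∀ f : EuclideanSpace ℝ (Fin d) → ℝ,
      LipschitzWith (Real.toNNReal L) f → ∀ t : ℝ, 0 < t →
        μ {ω | t ≤ |f (U ω) - f 0|} ≤
          ENNReal.ofReal (C * Real.exp (-(c₀ * d * t ^ p) / L ^ p)))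
    (L₀ : ℝ) (hL₀ : 0 < L₀)
    (g : EuclideanSpace ℝ (Fin d) → ℝ) (hg : LipschitzWith (Real.toNNReal L₀) g)
    (hR : Integrable (fun ω => R ω ^ q) μ) :
    ∫ ω, |g (R ω • U ω) - g 0| ^ q ∂μ ≤
      (q * C * Real.Gamma (q / p) / (p * c₀ ^ (q / p))) * (L₀ ^ q / (d : ℝ) ^ (q / p)) *
        ∫ ω, R ω ^ q ∂μ := by
  have hp0 : 0 < p := by linarith
  have hd0 : (0 : ℝ) < d := by exact_mod_cast hd
  set K := q * C * Real.Gamma (q / p) / (p * c₀ ^ (q / p)) * (L₀ ^ q / (d : ℝ) ^ (q / p))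
  have hK : 0 ≤ K := by have := Real.Gamma_pos_of_pos (div_pos hq hp0); positivity
  have hgc := hg.continuous
  have hmoment : ∀ r, 0 < r →
      ∫⁻ ω, ENNReal.ofReal (|g (r • U ω) - g 0| ^ q) ∂μ ≤ ENNReal.ofReal (K * r ^ q) := by
    intro r hr
    have hgr := hg.comp_smul_of_nonneg hr.le
    have hmeas : Measurable fun ω => |g (r • U ω) - g 0| := by fun_prop
    convert lintegral_rpow_le_of_meas_le_exp_div_rpow
      (.of_forall fun ω => abs_nonneg (g (r • U ω) - g 0)) hmeas.aemeasurable hp0 hq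
      (mul_pos hc₀ hd0) (mul_pos hr hL₀) hC.le
      (fun t ht => by simpa only [smul_zero] using hconc _ (mul_pos hr hL₀) _ hgr t ht) using 2
    rw [Real.mul_rpow hc₀.le hd0.le, Real.mul_rpow hr.le hL₀.le]
    ring
  have hlint : ∫⁻ ω, ENNReal.ofReal (|g (R ω • U ω) - g 0| ^ q) ∂μ ≤
      ENNReal.ofReal (K * ∫ ω, R ω ^ q ∂μ) := calc
    _ = ∫⁻ ω, ∫⁻ ω', ENNReal.ofReal (|g (R ω • U ω') - g 0| ^ q) ∂μ ∂μ :=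
        hindep.lintegral_comp_eq_lintegral_lintegral hRmeas hUmeas
          (φ := fun x => ENNReal.ofReal (|g (x.1 • x.2) - g 0| ^ q)) (by fun_prop)
    _ ≤ ∫⁻ ω, ENNReal.ofReal (K * R ω ^ q) ∂μ := lintegral_mono fun ω => hmoment _ (hRpos ω)
    _ = _ := by
        rw [← integral_const_mul, ofReal_integral_eq_lintegral_ofReal (hR.const_mul K)
          (.of_forall fun ω => by have := (hRpos ω).le; positivity)]
  have hmeas : Measurable fun ω => |g (R ω • U ω) - g 0| ^ q := by fun_prop
  rw [integral_eq_lintegral_of_nonneg_ae (.of_forall fun ω => by positivity)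
    hmeas.aestronglyMeasurable]
  have hRq : 0 ≤ ∫ ω, R ω ^ q ∂μ := integral_nonneg fun ω => by have := (hRpos ω).le; positivity
  exact ENNReal.toReal_le_of_le_ofReal (by positivity) hlint
end
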